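/- arXiv:1705.01596 — 2 statements merged into one kernel-verified Lean document; each statement's English description precedes it below -/
import Mathlib

section
/- For random variables Z_1, Z_2 on a finite alphabet with Z̃_i = f(Z_i) and with the marginal of (Z_1,Z̃_1) equal to that of (Z_2,Z̃_2): (1/2)[H(Z_1,Z_2) − H(Z̃_1,Z̃_2)] ≤ H(Z_1|Z̃_1), with equality if and only if Z_1 − Z̃_1 − Z̃_2 − Z_2 is a Markov chain. -/
open Real BigOperators Finset

/-- Shannon entropy of a probability mass function on a finite alphabet. -/
noncomputable def entropy {α : Type*} [Fintype α] (p : α → ℝ) : ℝ :=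
  ∑ x, Real.negMulLog (p x)

/-- `p` is a probability mass function. -/
def IsPMF {α : Type*} [Fintype α] (p : α → ℝ) : Prop :=
  (∀ x, 0 ≤ p x) ∧ ∑ x, p x = 1

/-- Distribution (pushforward pmf) of a random variable `X` on a finite
probability space with pmf `μ`. -/
noncomputable def pdist {Ω α : Type*} [Fintype Ω] [DecidableEq α]
    (μ : Ω → ℝ) (X : Ω → α) (a : α) : ℝ :=
  ∑ ω, if X ω = a then μ ω else 0

/-- Shannon entropy `H(X)` of a random variable. -/
noncomputable def Hm {Ω α : Type*} [Fintype Ω] [Fintype α] [DecidableEq α]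
    (μ : Ω → ℝ) (X : Ω → α) : ℝ :=
  entropy (pdist μ X)

/-- Conditional entropy `H(X|Y) = H(X,Y) - H(Y)`. -/
noncomputable def condEnt {Ω α β : Type*} [Fintype Ω] [Fintype α] [Fintype β]
    [DecidableEq α] [DecidableEq β] (μ : Ω → ℝ) (X : Ω → α) (Y : Ω → β) : ℝ :=
  Hm μ (fun ω => (X ω, Y ω)) - Hm μ Y

/-- Mutual information `I(X;Y) = H(X) + H(Y) - H(X,Y)`. -/
noncomputable def mutInfo {Ω α β : Type*} [Fintype Ω] [Fintype α] [Fintype β]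
    [DecidableEq α] [DecidableEq β] (μ : Ω → ℝ) (X : Ω → α) (Y : Ω → β) : ℝ :=
  Hm μ X + Hm μ Y - Hm μ (fun ω => (X ω, Y ω))

/-- Conditional mutual information `I(X;Y|W) = H(X|W) + H(Y|W) - H(X,Y|W)`. -/
noncomputable def condMutInfo {Ω α β γ : Type*} [Fintype Ω] [Fintype α] [Fintype β]
    [Fintype γ] [DecidableEq α] [DecidableEq β] [DecidableEq γ]
    (μ : Ω → ℝ) (X : Ω → α) (Y : Ω → β) (W : Ω → γ) : ℝ :=
  condEnt μ X W + condEnt μ Y W - condEnt μ (fun ω => (X ω, Y ω)) W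

/-- `Z_1 - Z̃_1 - Z̃_2 - Z_2` is a Markov chain (with `Z̃_i = f(Z_i)`):
`I(Z_1; (Z̃_2,Z_2) | Z̃_1) = 0` and `I((Z_1,Z̃_1); Z_2 | Z̃_2) = 0`. -/
def MarkovChain4 {Ω 𝒵 𝒵' : Type*} [Fintype Ω] [Fintype 𝒵] [Fintype 𝒵']
    [DecidableEq 𝒵] [DecidableEq 𝒵']
    (μ : Ω → ℝ) (Z1 Z2 : Ω → 𝒵) (f : 𝒵 → 𝒵') : Prop :=
  condMutInfo μ Z1 (fun ω => (f (Z2 ω), Z2 ω)) (fun ω => f (Z1 ω)) = 0 ∧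
  condMutInfo μ (fun ω => (Z1 ω, f (Z1 ω))) Z2 (fun ω => f (Z2 ω)) = 0

/-!
Write `Tᵢ = f Zᵢ`. Expanding into joint entropies and using that `Tᵢ` is a function of `Zᵢ`,
the quantity `H(Z₁|T₁) + H(Z₂|T₂) - (H(Z₁,Z₂) - H(T₁,T₂))` equals both
`I(Z₁; T₂,Z₂ | T₁) + I(T₁; Z₂ | T₂)` and `I(Z₁,T₁; Z₂ | T₂) + I(Z₁; T₂ | T₁)`,
while the chain rule gives `I(Z₁,T₁; Z₂ | T₂) = I(T₁; Z₂ | T₂) + I(Z₁; Z₂ | T₁,T₂)`.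
Equal marginals make the two conditional entropies equal, so nonnegativity of conditional mutual
information gives the inequality, and equality forces (and, by the chain rule, is forced by) the
vanishing of the two terms of the Markov condition. Nonnegativity of `I(X; Y | W)` is Gibbs'
inequality `log x ≥ 1 - 1/x`, comparing the law of `(X, Y, W)` with the conditionally independent
coupling `p(x,w) p(y,w) / p(w)`.
-/

section Entropy

variable {Ω α β : Type*} [Fintype Ω] [DecidableEq α] [DecidableEq β]

lemma pdist_eq_sum_filter (μ : Ω → ℝ) (X : Ω → α) (a : α) :
    pdist μ X a = ∑ ω with X ω = a, μ ω :=
  (sum_filter _ _).symm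

lemma pdist_nonneg {μ : Ω → ℝ} (hμ : ∀ ω, 0 ≤ μ ω) (X : Ω → α) (a : α) :
    0 ≤ pdist μ X a :=
  sum_nonneg fun ω _ => by split_ifs <;> simp [hμ ω]

lemma le_pdist_self {μ : Ω → ℝ} (hμ : ∀ ω, 0 ≤ μ ω) (X : Ω → α) (ω : Ω) :
    μ ω ≤ pdist μ X (X ω) := by
  rw [pdist_eq_sum_filter]
  exact single_le_sum (fun ω' _ => hμ ω') (by simp)

lemma sum_pdist [Fintype α] (μ : Ω → ℝ) (X : Ω → α) : ∑ a, pdist μ X a = ∑ ω, μ ω := by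
  simp_rw [pdist_eq_sum_filter]
  exact sum_fiberwise _ X μ

lemma pdist_comp [Fintype α] (μ : Ω → ℝ) (X : Ω → α) (g : α → β) (b : β) :
    pdist μ (fun ω => g (X ω)) b = ∑ a with g a = b, pdist μ X a := by
  unfold pdist
  rw [sum_comm]
  simp

lemma sum_pdist_prod_fst [Fintype α] (μ : Ω → ℝ) (X : Ω → α) (Y : Ω → β) (b : β) :
    ∑ a, pdist μ (fun ω => (X ω, Y ω)) (a, b) = pdist μ Y b := by
  rw [pdist_eq_sum_filter, ← sum_fiberwise _ X μ]
  refine sum_congr rfl fun a _ => ?_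
  rw [pdist_eq_sum_filter, filter_filter]
  simp only [Prod.mk.injEq, and_comm]

lemma Hm_eq_sum [Fintype α] (μ : Ω → ℝ) (X : Ω → α) :
    Hm μ X = ∑ ω, -(μ ω * log (pdist μ X (X ω))) := by
  rw [Hm, entropy, ← sum_fiberwise _ X]
  refine sum_congr rfl fun a _ => ?_
  have hfib : ∀ ω ∈ univ.filter (X · = a),
      -(μ ω * log (pdist μ X (X ω))) = -(μ ω * log (pdist μ X a)) :=
    fun ω h => by rw [(mem_filter.1 h).2]
  rw [sum_congr rfl hfib, sum_neg_distrib, ← sum_mul, ← pdist_eq_sum_filter, negMulLog, neg_mul]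

lemma Hm_congr [Fintype α] [Fintype β] {μ : Ω → ℝ} {X : Ω → α} {Y : Ω → β}
    (h : ∀ ω ω', X ω = X ω' ↔ Y ω = Y ω') : Hm μ X = Hm μ Y := by
  simp_rw [Hm_eq_sum, pdist, h]

lemma Hm_comp_congr_of_pdist_eq [Fintype α] [Fintype β] {μ : Ω → ℝ} {X Y : Ω → α}
    (h : pdist μ X = pdist μ Y) (g : α → β) :
    Hm μ (fun ω => g (X ω)) = Hm μ (fun ω => g (Y ω)) := by
  unfold Hm
  congr 1 with b
  rw [pdist_comp, pdist_comp, h]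

lemma condEnt_congr_of_pdist_eq [Fintype α] [Fintype β] {μ : Ω → ℝ}
    {X X' : Ω → α} {Y Y' : Ω → β}
    (h : pdist μ (fun ω => (X ω, Y ω)) = pdist μ (fun ω => (X' ω, Y' ω))) :
    condEnt μ X Y = condEnt μ X' Y' := by
  rw [condEnt, condEnt, Hm_comp_congr_of_pdist_eq h Prod.snd, Hm, h, ← Hm]

end Entropy

lemma Real.one_sub_div_le_log_sub {x y : ℝ} (hx : 0 < x) (hy : 0 < y) :
    1 - y / x ≤ log x - log y := by
  simpa [← log_div hx.ne' hy.ne', inv_div] using one_sub_inv_le_log_of_pos (div_pos hx hy)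

section CondMutInfo

variable {Ω α β γ : Type*} [Fintype Ω] [Fintype α] [Fintype β] [Fintype γ]
  [DecidableEq α] [DecidableEq β] [DecidableEq γ]

lemma sum_mul_div_pdist_le {μ : Ω → ℝ} (hμ : ∀ ω, 0 ≤ μ ω) (X : Ω → α) {g : α → ℝ}
    (hg : ∀ a, 0 ≤ g a) : ∑ ω, μ ω * g (X ω) / pdist μ X (X ω) ≤ ∑ a, g a := by
  rw [← sum_fiberwise _ X]
  refine sum_le_sum fun a _ => ?_
  have hfib : ∀ ω ∈ univ.filter (X · = a),
      μ ω * g (X ω) / pdist μ X (X ω) = μ ω * (g a / pdist μ X a) :=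
    fun ω h => by rw [(mem_filter.1 h).2, mul_div_assoc]
  rw [sum_congr rfl hfib, ← sum_mul, ← pdist_eq_sum_filter]
  rcases (pdist_nonneg hμ X a).eq_or_lt with h | h
  · simp [← h, hg a]
  · rw [mul_div_cancel₀ _ h.ne']

lemma condMutInfo_eq (μ : Ω → ℝ) (X : Ω → α) (Y : Ω → β) (W : Ω → γ) :
    condMutInfo μ X Y W = Hm μ (fun ω => (X ω, W ω)) + Hm μ (fun ω => (Y ω, W ω)) - Hm μ W
      - Hm μ (fun ω => ((X ω, Y ω), W ω)) := by
  unfold condMutInfo condEnt; ring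

lemma condMutInfo_eq_sum (μ : Ω → ℝ) (X : Ω → α) (Y : Ω → β) (W : Ω → γ) :
    condMutInfo μ X Y W = ∑ ω, μ ω *
      (log (pdist μ (fun ω => ((X ω, Y ω), W ω)) ((X ω, Y ω), W ω)) + log (pdist μ W (W ω))
        - log (pdist μ (fun ω => (X ω, W ω)) (X ω, W ω))
        - log (pdist μ (fun ω => (Y ω, W ω)) (Y ω, W ω))) := by
  simp only [condMutInfo_eq, Hm_eq_sum, ← sum_add_distrib, ← sum_sub_distrib]
  exact sum_congr rfl fun ω _ => by ring

lemma condMutInfo_nonneg {μ : Ω → ℝ} (hμ : IsPMF μ) (X : Ω → α) (Y : Ω → β) (W : Ω → γ) :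
    0 ≤ condMutInfo μ X Y W := by
  set V := fun ω => ((X ω, Y ω), W ω)
  set XW := fun ω => (X ω, W ω)
  set YW := fun ω => (Y ω, W ω)
  -- the law of `(X, Y, W)` if `X` and `Y` were conditionally independent given `W`
  let q : (α × β) × γ → ℝ := fun v =>
    pdist μ XW (v.1.1, v.2) * pdist μ YW (v.1.2, v.2) / pdist μ W v.2
  have hq_nonneg : ∀ v, 0 ≤ q v := fun v => by
    have := pdist_nonneg hμ.1 XW (v.1.1, v.2)
    have := pdist_nonneg hμ.1 YW (v.1.2, v.2)
    have := pdist_nonneg hμ.1 W v.2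
    positivity
  have hq_sum : ∑ v, q v = 1 := calc
    ∑ v, q v = ∑ w, ∑ a, ∑ b, pdist μ XW (a, w) * pdist μ YW (b, w) / pdist μ W w := by
        rw [Fintype.sum_prod_type, sum_comm]
        exact sum_congr rfl fun w _ => Fintype.sum_prod_type _
    _ = ∑ w, (∑ a, pdist μ XW (a, w)) * (∑ b, pdist μ YW (b, w)) / pdist μ W w := by
        simp_rw [sum_mul_sum, sum_div]
    _ = ∑ w, pdist μ W w := by simp_rw [XW, YW, sum_pdist_prod_fst, mul_self_div_self]
    _ = 1 := by rw [sum_pdist, hμ.2]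
  have hpoint : ∀ ω, μ ω - μ ω * q (V ω) / pdist μ V (V ω) ≤ μ ω *
      (log (pdist μ V (V ω)) + log (pdist μ W (W ω)) - log (pdist μ XW (XW ω))
        - log (pdist μ YW (YW ω))) := by
    intro ω
    rcases (hμ.1 ω).eq_or_lt with h0 | hpos
    · simp [← h0]
    have hV := hpos.trans_le (le_pdist_self hμ.1 V ω)
    have hW := hpos.trans_le (le_pdist_self hμ.1 W ω)
    have hXW := hpos.trans_le (le_pdist_self hμ.1 XW ω)
    have hYW := hpos.trans_le (le_pdist_self hμ.1 YW ω)
    have gibbs := one_sub_div_le_log_sub (mul_pos hV hW) (mul_pos hXW hYW)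
    rw [log_mul hV.ne' hW.ne', log_mul hXW.ne' hYW.ne'] at gibbs
    calc μ ω - μ ω * q (V ω) / pdist μ V (V ω)
        = μ ω * (1 - pdist μ XW (XW ω) * pdist μ YW (YW ω)
            / (pdist μ V (V ω) * pdist μ W (W ω))) := by ring
      _ ≤ _ := mul_le_mul_of_nonneg_left (by linarith) hpos.le
  calc 0 = ∑ ω, μ ω - ∑ v, q v := by rw [hq_sum, hμ.2, sub_self]
    _ ≤ ∑ ω, μ ω - ∑ ω, μ ω * q (V ω) / pdist μ V (V ω) :=
      sub_le_sub_left (sum_mul_div_pdist_le hμ.1 V hq_nonneg) _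
    _ ≤ _ := by rw [← sum_sub_distrib]; exact sum_le_sum fun ω _ => hpoint ω
    _ = condMutInfo μ X Y W := (condMutInfo_eq_sum μ X Y W).symm

end CondMutInfo

lemma condMutInfo_prod_left {Ω α β γ δ : Type*} [Fintype Ω] [Fintype α] [Fintype β] [Fintype γ]
    [Fintype δ] [DecidableEq α] [DecidableEq β] [DecidableEq γ] [DecidableEq δ]
    (μ : Ω → ℝ) (A : Ω → α) (B : Ω → β) (C : Ω → γ) (D : Ω → δ) :
    condMutInfo μ (fun ω => (A ω, B ω)) C D
      = condMutInfo μ B C D + condMutInfo μ A C (fun ω => (B ω, D ω)) := by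
  have h₁ : Hm μ (fun ω => ((A ω, B ω), D ω)) = Hm μ (fun ω => (A ω, (B ω, D ω))) :=
    Hm_congr fun ω ω' => by aesop
  have h₂ : Hm μ (fun ω => (((A ω, B ω), C ω), D ω))
      = Hm μ (fun ω => ((A ω, C ω), (B ω, D ω))) :=
    Hm_congr fun ω ω' => by aesop
  have h₃ : Hm μ (fun ω => ((B ω, C ω), D ω)) = Hm μ (fun ω => (C ω, (B ω, D ω))) :=
    Hm_congr fun ω ω' => by aesop
  simp only [condMutInfo_eq, h₁, h₂, h₃]
  ring

section Markov

variable {Ω 𝒵 𝒵' : Type*} [Fintype Ω] [Fintype 𝒵] [Fintype 𝒵'] [DecidableEq 𝒵] [DecidableEq 𝒵']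
  (μ : Ω → ℝ) (Z1 Z2 : Ω → 𝒵) (f : 𝒵 → 𝒵')

lemma condEnt_add_condEnt_eq_left :
    condEnt μ Z1 (fun ω => f (Z1 ω)) + condEnt μ Z2 (fun ω => f (Z2 ω))
      = Hm μ (fun ω => (Z1 ω, Z2 ω)) - Hm μ (fun ω => (f (Z1 ω), f (Z2 ω)))
        + condMutInfo μ Z1 (fun ω => (f (Z2 ω), Z2 ω)) (fun ω => f (Z1 ω))
        + condMutInfo μ (fun ω => f (Z1 ω)) Z2 (fun ω => f (Z2 ω)) := by
  have h₁ : Hm μ (fun ω => ((f (Z2 ω), Z2 ω), f (Z1 ω)))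
      = Hm μ (fun ω => ((f (Z1 ω), Z2 ω), f (Z2 ω))) :=
    Hm_congr fun ω ω' => by aesop
  have h₂ : Hm μ (fun ω => ((Z1 ω, (f (Z2 ω), Z2 ω)), f (Z1 ω)))
      = Hm μ (fun ω => (Z1 ω, Z2 ω)) :=
    Hm_congr fun ω ω' => by aesop
  simp only [condEnt, condMutInfo_eq, h₁, h₂]
  ring

lemma condEnt_add_condEnt_eq_right :
    condEnt μ Z1 (fun ω => f (Z1 ω)) + condEnt μ Z2 (fun ω => f (Z2 ω))
      = Hm μ (fun ω => (Z1 ω, Z2 ω)) - Hm μ (fun ω => (f (Z1 ω), f (Z2 ω)))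
        + condMutInfo μ (fun ω => (Z1 ω, f (Z1 ω))) Z2 (fun ω => f (Z2 ω))
        + condMutInfo μ Z1 (fun ω => f (Z2 ω)) (fun ω => f (Z1 ω)) := by
  have h₁ : Hm μ (fun ω => ((Z1 ω, f (Z1 ω)), f (Z2 ω)))
      = Hm μ (fun ω => ((Z1 ω, f (Z2 ω)), f (Z1 ω))) :=
    Hm_congr fun ω ω' => by aesop
  have h₂ : Hm μ (fun ω => (((Z1 ω, f (Z1 ω)), Z2 ω), f (Z2 ω)))
      = Hm μ (fun ω => (Z1 ω, Z2 ω)) :=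
    Hm_congr fun ω ω' => by aesop
  have h₃ : Hm μ (fun ω => (f (Z2 ω), f (Z1 ω))) = Hm μ (fun ω => (f (Z1 ω), f (Z2 ω))) :=
    Hm_congr fun ω ω' => by aesop
  simp only [condEnt, condMutInfo_eq, h₁, h₂, h₃]
  ring

end Markov

/-- with `Z̃_i = f(Z_i)` and the law of `(Z_1,Z̃_1)` equal to that
of `(Z_2,Z̃_2)`, `(1/2)[H(Z_1,Z_2) - H(Z̃_1,Z̃_2)] ≤ H(Z_1|Z̃_1)`, with equality
iff `Z_1 - Z̃_1 - Z̃_2 - Z_2` is a Markov chain. -/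
theorem stmt5 {Ω 𝒵 𝒵' : Type*} [Fintype Ω] [Fintype 𝒵] [Fintype 𝒵']
    [DecidableEq 𝒵] [DecidableEq 𝒵']
    (μ : Ω → ℝ) (hμ : IsPMF μ) (Z1 Z2 : Ω → 𝒵) (f : 𝒵 → 𝒵')
    (hmarg : pdist μ (fun ω => (Z1 ω, f (Z1 ω)))
      = pdist μ (fun ω => (Z2 ω, f (Z2 ω)))) :
    (1 / 2) * (Hm μ (fun ω => (Z1 ω, Z2 ω))
        - Hm μ (fun ω => (f (Z1 ω), f (Z2 ω))))
      ≤ condEnt μ Z1 (fun ω => f (Z1 ω)) ∧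
    ((1 / 2) * (Hm μ (fun ω => (Z1 ω, Z2 ω))
        - Hm μ (fun ω => (f (Z1 ω), f (Z2 ω))))
      = condEnt μ Z1 (fun ω => f (Z1 ω)) ↔ MarkovChain4 μ Z1 Z2 f) := by
  have hsymm := condEnt_congr_of_pdist_eq hmarg
  have hleft := condEnt_add_condEnt_eq_left μ Z1 Z2 f
  have hright := condEnt_add_condEnt_eq_right μ Z1 Z2 f
  have hchain := condMutInfo_prod_left μ Z1 (fun ω => f (Z1 ω)) Z2 (fun ω => f (Z2 ω))
  have hM₁ := condMutInfo_nonneg hμ Z1 (fun ω => (f (Z2 ω), Z2 ω)) (fun ω => f (Z1 ω))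
  have hM₂ := condMutInfo_nonneg hμ (fun ω => (Z1 ω, f (Z1 ω))) Z2 (fun ω => f (Z2 ω))
  have hT₁ := condMutInfo_nonneg hμ (fun ω => f (Z1 ω)) Z2 (fun ω => f (Z2 ω))
  have hT₂ := condMutInfo_nonneg hμ Z1 (fun ω => f (Z2 ω)) (fun ω => f (Z1 ω))
  have hZ := condMutInfo_nonneg hμ Z1 Z2 (fun ω => (f (Z1 ω), f (Z2 ω)))
  rw [MarkovChain4]
  refine ⟨by linarith, fun h => ⟨by linarith, by linarith⟩, fun ⟨h₁, h₂⟩ => by linarith⟩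
end

section
/- Let X be uniform on 𝒬, Z ∈ 𝒬 ∪ {e} independent of X with ε = P(Z=e), and Y = h(X,Z)·1{Z≠e} + e·1{Z=e} with h satisfying S-I and S-II. Define Z̃ = 0 if Z ≠ e and Z̃ = e if Z = e. Then I(X;Y) = (1−ε)·log q − H(Z|Z̃). -/
/-!
With uniform input, `I(X;Y) = H(X) + H(Y) - H(X,Y)` and `H(X) = log q`. By S-I every row of
the channel is a relabelling of the noise pmf, so `H(X,Y) = log q + H(Z)`. By S-II the noise
symbols that produce a fixed output symbol from the `q` inputs are all distinct, so they exhaust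
`𝒬` and the non-erased output is uniform: `H(Y) = h_b(ε) + (1 - ε) log q`. Finally
`H(Z) = H(Z|Z̃) + h_b(ε)`, since `Z̃` is a function of `Z` with law `(1 - ε, ε)`.
-/

open Real BigOperators Finset

/-- Joint pmf of input distribution `p` fed through a channel `W`. -/
noncomputable def jointOf {𝒳 𝒴 : Type*} (p : 𝒳 → ℝ) (W : 𝒳 → 𝒴 → ℝ) :
    𝒳 × 𝒴 → ℝ := fun xy => p xy.1 * W xy.1 xy.2

/-- First marginal of a joint pmf. -/
noncomputable def marg1 {𝒳 𝒴 : Type*} [Fintype 𝒴] (j : 𝒳 × 𝒴 → ℝ) : 𝒳 → ℝ :=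
  fun x => ∑ y, j (x, y)

/-- Second marginal of a joint pmf. -/
noncomputable def marg2 {𝒳 𝒴 : Type*} [Fintype 𝒳] (j : 𝒳 × 𝒴 → ℝ) : 𝒴 → ℝ :=
  fun y => ∑ x, j (x, y)

/-- Mutual information of a joint pmf. -/
noncomputable def mutInfoJ {𝒳 𝒴 : Type*} [Fintype 𝒳] [Fintype 𝒴]
    (j : 𝒳 × 𝒴 → ℝ) : ℝ :=
  entropy (marg1 j) + entropy (marg2 j) - entropy j

/-- Transition probabilities of the single-use noise-erasure channel
`Y = h(X,Z)` if `Z ≠ e`, `Y = e` if `Z = e`, where the erasure symbol `e`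
is modeled by `none` and the noise has pmf `pZ`. -/
noncomputable def necW {q : ℕ} (h : Fin q → Fin q → Fin q)
    (pZ : Option (Fin q) → ℝ) : Fin q → Option (Fin q) → ℝ :=
  fun x y => ∑ z : Option (Fin q), if Option.map (h x) z = y then pZ z else 0

/-- Joint pmf of the noise `Z` and the auxiliary erasure indicator
`Z̃ = 1{Z = e}` (`true` meaning erasure). -/
noncomputable def jointTilde {q : ℕ} (pZ : Option (Fin q) → ℝ) :
    Option (Fin q) × Bool → ℝ :=
  fun p => if p.1.isNone = p.2 then pZ p.1 else 0

section Entropy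

variable {α β : Type*} [Fintype α] [Fintype β]

lemma entropy_comp_equiv (p : β → ℝ) (e : α ≃ β) : entropy (p ∘ e) = entropy p :=
  e.sum_comp fun b => negMulLog (p b)

lemma entropy_const_mul (c : ℝ) (p : α → ℝ) :
    entropy (fun a => c * p a) = c * entropy p + negMulLog c * ∑ a, p a := by
  simp only [entropy, negMulLog_mul, sum_add_distrib, ← mul_sum, ← sum_mul]
  ring

lemma entropy_option (p : Option α → ℝ) :
    entropy p = negMulLog (p none) + entropy (fun a => p (some a)) :=
  Fintype.sum_option _

lemma entropy_prod (j : α × β → ℝ) : entropy j = ∑ x, entropy (fun y => j (x, y)) :=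
  Fintype.sum_prod_type _

lemma entropy_const (c : ℝ) : entropy (fun _ : α => c) = Fintype.card α * negMulLog c := by
  rw [entropy, sum_const, card_univ, nsmul_eq_mul]

lemma negMulLog_inv (x : ℝ) : negMulLog x⁻¹ = x⁻¹ * log x := by
  rw [negMulLog, log_inv]
  ring

end Entropy

section ConstantInput

variable {α β : Type*}

lemma marg1_jointOf_const [Fintype β] (c : ℝ) (W : α → β → ℝ) (x : α) :
    marg1 (jointOf (fun _ => c) W) x = c * ∑ y, W x y :=
  (mul_sum _ _ _).symm

lemma marg2_jointOf_const [Fintype α] (c : ℝ) (W : α → β → ℝ) (y : β) :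
    marg2 (jointOf (fun _ => c) W) y = c * ∑ x, W x y :=
  (mul_sum _ _ _).symm

lemma entropy_jointOf_const_of_rows_perm [Fintype α] [Fintype β] (c : ℝ) (W : α → β → ℝ)
    (w : β → ℝ) (σ : α → Equiv.Perm β) (hW : ∀ x y, W x y = w (σ x y)) :
    entropy (jointOf (fun _ => c) W)
      = Fintype.card α * (c * entropy w + negMulLog c * ∑ y, w y) := by
  have hrow : ∀ x, entropy (fun y => jointOf (fun _ => c) W (x, y))
      = entropy (fun y => c * w y) := fun x => by
    simp only [jointOf, hW]
    exact entropy_comp_equiv (fun y => c * w y) (σ x)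
  rw [entropy_prod, sum_congr rfl fun x _ => hrow x, sum_const, card_univ, nsmul_eq_mul,
    entropy_const_mul]

end ConstantInput

section NoiseErasureChannel

variable {q : ℕ} {h : Fin q → Fin q → Fin q} (pZ : Option (Fin q) → ℝ)

lemma necW_eq_comp_optionCongr (hS1 : ∀ x, Function.Bijective (h x)) (x : Fin q)
    (y : Option (Fin q)) :
    necW h pZ x y = pZ ((Equiv.optionCongr (Equiv.ofBijective (h x) (hS1 x))).symm y) := by
  set e := Equiv.optionCongr (Equiv.ofBijective (h x) (hS1 x))
  have he : ∀ z, Option.map (h x) z = y ↔ z = e.symm y := fun z => e.eq_symm_apply.symm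
  simp only [necW, he, sum_ite_eq', mem_univ, if_true]

lemma necW_some (hS1 : ∀ x, Function.Bijective (h x)) {ht : Fin q → Fin q → Fin q}
    (hinv : ∀ x y, h x (ht x y) = y) (x b : Fin q) :
    necW h pZ x (some b) = pZ (some (ht x b)) := by
  rw [necW_eq_comp_optionCongr pZ hS1, ← Equiv.optionCongr_symm, Equiv.optionCongr_apply,
    Option.map_some, (Equiv.ofBijective (h x) (hS1 x)).symm_apply_eq.mpr (hinv x b).symm]

lemma entropy_jointOf_necW (hq : 0 < q) (hpZ : ∑ z, pZ z = 1)
    (hS1 : ∀ x, Function.Bijective (h x)) :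
    entropy (jointOf (fun _ : Fin q => (q : ℝ)⁻¹) (necW h pZ)) = entropy pZ + log q := by
  have hq0 : (q : ℝ) ≠ 0 := by positivity
  rw [entropy_jointOf_const_of_rows_perm _ _ pZ _ (necW_eq_comp_optionCongr pZ hS1), hpZ,
    Fintype.card_fin, negMulLog_inv]
  field_simp

lemma entropy_marg1_necW (hq : 0 < q) (hpZ : ∑ z, pZ z = 1)
    (hS1 : ∀ x, Function.Bijective (h x)) :
    entropy (marg1 (jointOf (fun _ : Fin q => (q : ℝ)⁻¹) (necW h pZ))) = log q := by
  have hq0 : (q : ℝ) ≠ 0 := by positivity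
  have hmarg1 : marg1 (jointOf (fun _ : Fin q => (q : ℝ)⁻¹) (necW h pZ)) = fun _ => (q : ℝ)⁻¹ :=
    funext fun x => by
      rw [marg1_jointOf_const, Fintype.sum_congr _ _ (necW_eq_comp_optionCongr pZ hS1 x),
        Equiv.sum_comp, hpZ, mul_one]
  rw [hmarg1, entropy_const, Fintype.card_fin, negMulLog_inv]
  field_simp

lemma entropy_marg2_necW (hq : 0 < q) (hS1 : ∀ x, Function.Bijective (h x))
    {ht : Fin q → Fin q → Fin q} (hinv : ∀ x y, h x (ht x y) = y)
    (hS2 : ∀ y, Function.Injective (fun x => ht x y)) :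
    entropy (marg2 (jointOf (fun _ : Fin q => (q : ℝ)⁻¹) (necW h pZ)))
      = negMulLog (pZ none) + negMulLog (∑ a, pZ (some a))
        + (∑ a, pZ (some a)) * log q := by
  have hq0 : (q : ℝ) ≠ 0 := by positivity
  have hnone : marg2 (jointOf (fun _ : Fin q => (q : ℝ)⁻¹) (necW h pZ)) none = pZ none := by
    simp [marg2_jointOf_const, necW, hq0]
  have hsome : (fun b => marg2 (jointOf (fun _ : Fin q => (q : ℝ)⁻¹) (necW h pZ)) (some b))
      = fun _ => (q : ℝ)⁻¹ * ∑ a, pZ (some a) := funext fun b => by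
    rw [marg2_jointOf_const]
    simp only [necW_some pZ hS1 hinv]
    congr 1
    exact Fintype.sum_bijective _ (hS2 b).bijective_of_finite _ _ fun _ => rfl
  rw [entropy_option, hnone, hsome, entropy_const, Fintype.card_fin, negMulLog_mul,
    negMulLog_inv]
  field_simp
  ring

lemma entropy_jointTilde : entropy (jointTilde pZ) = entropy pZ := by
  rw [entropy_prod]
  refine sum_congr rfl fun z _ => ?_
  cases z <;> simp [entropy, jointTilde]

lemma entropy_marg2_jointTilde :
    entropy (marg2 (jointTilde pZ)) = negMulLog (pZ none) + negMulLog (∑ a, pZ (some a)) := by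
  rw [entropy, Fintype.sum_bool]
  simp [marg2, jointTilde, Fintype.sum_option]

end NoiseErasureChannel

/-- for the single-use NEC satisfying S-I and S-II with uniform
input, `I(X;Y) = (1-ε) log q - H(Z|Z̃)` where `ε = P(Z = e)` and `Z̃` is the
erasure indicator of `Z`. -/
theorem stmt12 {q : ℕ} (hq : 0 < q) (h : Fin q → Fin q → Fin q)
    (pZ : Option (Fin q) → ℝ) (hpZ : IsPMF pZ)
    (hS1 : ∀ x, Function.Bijective (h x))
    (ht : Fin q → Fin q → Fin q) (hinv : ∀ x y, h x (ht x y) = y)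
    (hS2 : ∀ y, Function.Injective (fun x => ht x y)) :
    mutInfoJ (jointOf (fun _ : Fin q => (q : ℝ)⁻¹) (necW h pZ))
      = (1 - pZ none) * Real.log (q : ℝ)
        - (entropy (jointTilde pZ) - entropy (marg2 (jointTilde pZ))) := by
  have hsum : pZ none + ∑ a, pZ (some a) = 1 := by
    rw [← Fintype.sum_option]
    exact hpZ.2
  rw [mutInfoJ, entropy_marg1_necW pZ hq hpZ.2 hS1, entropy_marg2_necW pZ hq hS1 hinv hS2,
    entropy_jointOf_necW pZ hq hpZ.2 hS1, entropy_jointTilde, entropy_marg2_jointTilde,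
    entropy_option pZ, ← hsum]
  ring
end
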